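/- arXiv:2511.18060 — 2 statements merged into one kernel-verified Lean document; each statement's English description precedes it below -/
import Mathlib

section
/- Let d ≥ 1, let C_π be a symmetric positive definite d×d real matrix, set Γ := C_π^{-1} + (1/2)I, let C_0 be symmetric positive definite with C_0 − C_π invertible, and let T > 0. Assume that for every γ ∈ [0,T] the matrix e^{Γγ}(C_0 − C_π)^{-1}e^{Γγ} + (e^{γ} − 1)C_π^{-1} is invertible. Then Q_γ := C_π + ( e^{Γγ}(C_0 − C_π)^{-1}e^{Γγ} + (e^{γ} − 1)C_π^{-1} )^{-1} satisfies Q_0 = C_0 and, for every γ ∈ [0,T], Q is differentiable at γ with dQ_γ/dγ = −Q_γ C_π^{-1}(I − 2M_γ C_π^{-1})Q_γ − (I − (1/2)C_π + 2M_γ)C_π^{-1}Q_γ − Q_γ C_π^{-1}(I − (1/2)C_π + 2M_γ) + 2(I + M_γ), where M_γ := (e^{γ} − 1)I. (This is the covariance of one step of the Wasserstein-then-Fisher–Rao sequential splitting in the multivariate Gaussian case.) -/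
/-! With `A γ = e^{Γγ} (C₀ - Cπ)⁻¹ e^{Γγ} + (e^γ - 1) Cπ⁻¹` we have `Q = Cπ + A⁻¹`, so
`Q' = -A⁻¹ A' A⁻¹` with `A' = Γ B + B Γ + e^γ Cπ⁻¹`, where `B = A - (e^γ - 1) Cπ⁻¹`.
Substituting `Γ = Cπ⁻¹ + ½` turns the claimed ODE into an identity in the ring of matrices
that only uses `Cπ Cπ⁻¹ = 1` and `A A⁻¹ = 1`. -/

open Matrix Set

attribute [local instance] Matrix.frobeniusNormedAddCommGroup Matrix.frobeniusNormedSpace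

attribute [local instance] Matrix.frobeniusNormedRing Matrix.frobeniusNormedAlgebra

theorem HasDerivAt.ringInverse {𝕂 𝔸 : Type*} [NontriviallyNormedField 𝕂] [NormedRing 𝔸]
    [NormedAlgebra 𝕂 𝔸] [HasSummableGeomSeries 𝔸] {f : 𝕂 → 𝔸} {f' : 𝔸} {t : 𝕂}
    (hf : HasDerivAt f f' t) (ht : IsUnit (f t)) :
    HasDerivAt (fun s => Ring.inverse (f s))
      (-(Ring.inverse (f t) * f' * Ring.inverse (f t))) t := by
  obtain ⟨u, hu⟩ := ht
  rw [← hu, Ring.inverse_unit]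
  exact (hu ▸ hasFDerivAt_ringInverse (𝕜 := 𝕂) u).comp_hasDerivAt t hf

theorem HasDerivAt.matrix_inv {𝕜 n : Type*} [RCLike 𝕜] [Fintype n] [DecidableEq n]
    {f : 𝕜 → Matrix n n 𝕜} {f' : Matrix n n 𝕜} {t : 𝕜}
    (hf : HasDerivAt f f' t) (ht : IsUnit (f t)) :
    HasDerivAt (fun s => (f s)⁻¹) (-((f t)⁻¹ * f' * (f t)⁻¹)) t := by
  have h := hf.ringInverse ht
  simp only [← nonsing_inv_eq_ringInverse] at h
  exact h

theorem hasDerivAt_exp_smul_mul_mul_exp_smul {𝕂 𝔸 : Type*} [RCLike 𝕂] [NormedRing 𝔸]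
    [NormedAlgebra 𝕂 𝔸] [CompleteSpace 𝔸] (Γ S : 𝔸) (t : 𝕂) :
    HasDerivAt (fun s : 𝕂 => NormedSpace.exp (s • Γ) * S * NormedSpace.exp (s • Γ))
      (Γ * (NormedSpace.exp (t • Γ) * S * NormedSpace.exp (t • Γ))
        + NormedSpace.exp (t • Γ) * S * NormedSpace.exp (t • Γ) * Γ) t := by
  convert ((hasDerivAt_exp_smul_const' Γ t).mul_const S).fun_mul
    (hasDerivAt_exp_smul_const Γ t) using 1
  simp only [mul_assoc]

theorem covariance_ode_rhs_eq {R : Type*} [Ring R] [Algebra ℝ R] (Cπ K A P : R) (m : ℝ)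
    (hCK : Cπ * K = 1) (hKC : K * Cπ = 1) (hPA : P * A = 1) (hAP : A * P = 1) :
    -((Cπ + P) * K * (1 - (2 : ℝ) • (m • (1 : R) * K)) * (Cπ + P))
      - (1 - (1 / 2 : ℝ) • Cπ + (2 : ℝ) • (m • (1 : R))) * K * (Cπ + P)
      - (Cπ + P) * K * (1 - (1 / 2 : ℝ) • Cπ + (2 : ℝ) • (m • (1 : R)))
      + (2 : ℝ) • (1 + m • (1 : R))
    = -(P * ((K + (1 / 2 : ℝ) • 1) * (A - m • K) + (A - m • K) * (K + (1 / 2 : ℝ) • 1)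
        + (m + 1) • K) * P) := by
  have hPA' : ∀ x : R, P * (A * x) = x := fun x => by rw [← mul_assoc, hPA, one_mul]
  simp only [mul_add, add_mul, mul_sub, sub_mul, smul_mul_assoc, mul_smul_comm, smul_add,
    smul_sub, smul_smul, mul_assoc, one_mul, mul_one, hPA', hAP, hKC, hCK]
  module

theorem wfr_split_WFR_covariance_general
    (d : ℕ)
    (Cπ : Matrix (Fin d) (Fin d) ℝ) (hCπ : Cπ.PosDef)
    (Γ : Matrix (Fin d) (Fin d) ℝ) (hΓ : Γ = Cπ⁻¹ + (1 / 2 : ℝ) • 1)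
    (C₀ : Matrix (Fin d) (Fin d) ℝ) (hC₀π : IsUnit (C₀ - Cπ))
    (T : ℝ)
    (hinv : ∀ γ ∈ Icc (0 : ℝ) T,
      IsUnit (NormedSpace.exp (γ • Γ) * (C₀ - Cπ)⁻¹ * NormedSpace.exp (γ • Γ)
        + (Real.exp γ - 1) • Cπ⁻¹))
    (M : ℝ → Matrix (Fin d) (Fin d) ℝ) (hM : ∀ γ, M γ = (Real.exp γ - 1) • 1)
    (Q : ℝ → Matrix (Fin d) (Fin d) ℝ)
    (hQ : ∀ γ, Q γ = Cπ +
      (NormedSpace.exp (γ • Γ) * (C₀ - Cπ)⁻¹ * NormedSpace.exp (γ • Γ)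
        + (Real.exp γ - 1) • Cπ⁻¹)⁻¹) :
    Q 0 = C₀ ∧
      ∀ γ ∈ Icc (0 : ℝ) T,
        HasDerivAt Q
          (-(Q γ * Cπ⁻¹ * (1 - (2 : ℝ) • (M γ * Cπ⁻¹)) * Q γ)
            - (1 - (1 / 2 : ℝ) • Cπ + (2 : ℝ) • M γ) * Cπ⁻¹ * Q γ
            - Q γ * Cπ⁻¹ * (1 - (1 / 2 : ℝ) • Cπ + (2 : ℝ) • M γ)
            + (2 : ℝ) • (1 + M γ)) γ := by
  set B := fun t : ℝ => NormedSpace.exp (t • Γ) * (C₀ - Cπ)⁻¹ * NormedSpace.exp (t • Γ)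
  set A := fun t : ℝ => B t + (Real.exp t - 1) • Cπ⁻¹
  have hQA : Q = fun t => Cπ + (A t)⁻¹ := funext hQ
  refine ⟨?_, fun γ hγ => ?_⟩
  · simp [hQA, A, B, (C₀ - Cπ).nonsing_inv_nonsing_inv ((isUnit_iff_isUnit_det _).mp hC₀π)]
  have hdetCπ : IsUnit Cπ.det := (isUnit_iff_isUnit_det _).mp hCπ.isUnit
  have hdetA : IsUnit (A γ).det := (isUnit_iff_isUnit_det _).mp (hinv γ hγ)
  have hA : HasDerivAt A (Γ * B γ + B γ * Γ + Real.exp γ • Cπ⁻¹) γ :=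
    (hasDerivAt_exp_smul_mul_mul_exp_smul Γ _ γ).add
      (((Real.hasDerivAt_exp γ).sub_const 1).smul_const _)
  have hQ' := (hA.matrix_inv (hinv γ hγ)).const_add Cπ
  rw [← hQA] at hQ'
  refine hQ'.congr_deriv ?_
  rw [hQ γ, hM γ, covariance_ode_rhs_eq Cπ Cπ⁻¹ (A γ) (A γ)⁻¹ (Real.exp γ - 1)
    (mul_nonsing_inv _ hdetCπ) (nonsing_inv_mul _ hdetCπ) (nonsing_inv_mul _ hdetA)
    (mul_nonsing_inv _ hdetA), sub_add_cancel, hΓ, add_sub_cancel_right]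

/-- Covariance of one step of the Wasserstein-then-Fisher–Rao sequential
splitting in the multivariate Gaussian case solves the perturbed covariance ODE with
perturbation `M_γ = (e^γ − 1) I`. -/
theorem wfr_split_WFR_covariance
    (d : ℕ) (hd : 1 ≤ d)
    (Cπ : Matrix (Fin d) (Fin d) ℝ) (hCπ : Cπ.PosDef)
    (Γ : Matrix (Fin d) (Fin d) ℝ) (hΓ : Γ = Cπ⁻¹ + (1 / 2 : ℝ) • 1)
    (C₀ : Matrix (Fin d) (Fin d) ℝ) (hC₀ : C₀.PosDef) (hC₀π : IsUnit (C₀ - Cπ))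
    (T : ℝ) (hT : 0 < T)
    (hinv : ∀ γ ∈ Icc (0 : ℝ) T,
      IsUnit (NormedSpace.exp (γ • Γ) * (C₀ - Cπ)⁻¹ * NormedSpace.exp (γ • Γ)
        + (Real.exp γ - 1) • Cπ⁻¹))
    (M : ℝ → Matrix (Fin d) (Fin d) ℝ) (hM : ∀ γ, M γ = (Real.exp γ - 1) • 1)
    (Q : ℝ → Matrix (Fin d) (Fin d) ℝ)
    (hQ : ∀ γ, Q γ = Cπ +
      (NormedSpace.exp (γ • Γ) * (C₀ - Cπ)⁻¹ * NormedSpace.exp (γ • Γ)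
        + (Real.exp γ - 1) • Cπ⁻¹)⁻¹) :
    Q 0 = C₀ ∧
      ∀ γ ∈ Icc (0 : ℝ) T,
        HasDerivAt Q
          (-(Q γ * Cπ⁻¹ * (1 - (2 : ℝ) • (M γ * Cπ⁻¹)) * Q γ)
            - (1 - (1 / 2 : ℝ) • Cπ + (2 : ℝ) • M γ) * Cπ⁻¹ * Q γ
            - Q γ * Cπ⁻¹ * (1 - (1 / 2 : ℝ) • Cπ + (2 : ℝ) • M γ)
            + (2 : ℝ) • (1 + M γ)) γ :=
  wfr_split_WFR_covariance_general d Cπ hCπ Γ hΓ C₀ hC₀π T hinv M hM Q hQ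
end

section
/- Let d ≥ 1, let C_π be a symmetric positive definite d×d real matrix, set Γ := C_π^{-1} + (1/2)I, let γ > 0, and let E_0 be symmetric positive definite. Define the sequence (E_n^α) by E_0^α := E_0 and the recursion E_{n+1}^α = ( e^{Γγ}(E_n^α)^{-1}e^{Γγ} + (e^{γ} − 1)C_π^{-1}e^{2γC_π^{-1}} )^{-1}. Then for every n ≥ 0 this recursion is well defined and E_n^α = e^{−nγΓ} ( E_0^{-1} + Ω^α C_π^{-1}( I − e^{−2nγΓ} ) )^{-1} e^{−nγΓ}, where Ω^α := (1 − e^{γ})( e^{−2γC_π^{-1}} − e^{γ}I )^{-1} = (1 − e^{γ})(I − e^{2γΓ})^{-1}e^{2γC_π^{-1}}. (This is the closed form of the covariance error of the Fisher–Rao-then-Wasserstein splitting scheme between Gaussians after n steps of size γ.) -/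
/-!
For the precisions `Fₙ := (Eₙ^α)⁻¹` the recursion is affine, `Fₙ₊₁ = G Fₙ G + B` with
`G = e^{γΓ}` and `B = (e^γ - 1) C_π⁻¹ e^{2γC_π⁻¹}`. Every matrix involved is a function of `C_π⁻¹`,
so they all commute, and `-W` with `W := Ω^α C_π⁻¹` is a fixed point, i.e. `G W G - W = B`, because
`Ω^α (e^{2γΓ} - I) = (e^γ - 1) e^{2γC_π⁻¹}`. Hence `Fₙ + W = Gⁿ (F₀ + W) Gⁿ`, and conjugating by
`G⁻ⁿ` gives the closed form. Each step preserves positive definiteness, which makes every inverse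
honest; `I - e^{2γΓ}` is invertible since `Γ ≻ 0` keeps `1` out of the spectrum of `e^{2γΓ}`.
-/

open Matrix

theorem Commute.ringInverse_right {M₀ : Type*} [MonoidWithZero M₀] {a b : M₀}
    (h : Commute a b) : Commute a (Ring.inverse b) := by
  by_cases hb : IsUnit b
  · obtain ⟨u, rfl⟩ := hb
    rw [Ring.inverse_unit]
    exact h.units_inv_right
  · rw [Ring.inverse_non_unit b hb]
    exact Commute.zero_right a

section AffineRecursion

variable {R : Type*} [Ring R]

theorem add_eq_pow_mul_mul_pow_of_affine_recursion {F : ℕ → R} {g w : R}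
    (hF : ∀ n, F (n + 1) = g * F n * g + (g * w * g - w)) (n : ℕ) :
    F n + w = g ^ n * (F 0 + w) * g ^ n := by
  induction n with
  | zero => simp
  | succ n ih =>
    calc F (n + 1) + w = g * (F n + w) * g := by rw [hF]; noncomm_ring
      _ = (g * g ^ n) * (F 0 + w) * (g ^ n * g) := by rw [ih]; noncomm_ring
      _ = g ^ (n + 1) * (F 0 + w) * g ^ (n + 1) := by rw [← pow_succ', ← pow_succ]

theorem mul_mul_eq_add_mul_one_sub_of_eq_mul_add_mul {F X g h w : R}
    (hF : F + w = g * (X + w) * g) (hhg : h * g = 1) (hgh : g * h = 1) (hw : Commute w h) :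
    h * F * h = X + w * (1 - h * h) := by
  rw [eq_sub_of_add_eq hF]
  calc h * (g * (X + w) * g - w) * h = (h * g) * (X + w) * (g * h) - h * w * h := by noncomm_ring
    _ = X + w * (1 - h * h) := by rw [hhg, hgh, ← hw.eq]; noncomm_ring

end AffineRecursion

namespace Matrix

variable {n : Type*} [Fintype n] [DecidableEq n]

theorem commute_nonsing_inv_right {α : Type*} [CommRing α] {X K : Matrix n n α}
    (h : Commute X K) : Commute X K⁻¹ := by
  rw [nonsing_inv_eq_ringInverse]
  exact h.ringInverse_right

theorem exp_smul_one (c : ℝ) : NormedSpace.exp (c • (1 : Matrix n n ℝ)) = Real.exp c • 1 := by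
  rw [smul_one_eq_diagonal, exp_diagonal, smul_one_eq_diagonal, Real.exp_eq_exp_ℝ, Pi.exp_def]

theorem exp_smul_mul_exp_smul (A : Matrix n n ℝ) (s t : ℝ) :
    NormedSpace.exp (s • A) * NormedSpace.exp (t • A) = NormedSpace.exp ((s + t) • A) := by
  rw [add_smul, exp_add_of_commute _ _ (((Commute.refl A).smul_left s).smul_right t)]

theorem exp_smul_add_smul_one (A : Matrix n n ℝ) (t c : ℝ) :
    NormedSpace.exp (t • (A + c • 1)) = Real.exp (t * c) • NormedSpace.exp (t • A) := by
  rw [smul_add, smul_smul, exp_add_of_commute _ _ ((Commute.one_right _).smul_right _),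
    exp_smul_one, mul_smul_comm, mul_one]

theorem real_cfc_exp_eq_exp {B : Matrix n n ℝ} (hB : B.IsHermitian) :
    cfc Real.exp B = NormedSpace.exp B :=
  -- any matrix norm inducing the entrywise topology will do
  @CFC.real_exp_eq_normedSpace_exp _ Matrix.linftyOpNormedRing _ Matrix.linftyOpNormedAlgebra
    IsHermitian.instContinuousFunctionalCalculus B hB.isSelfAdjoint

theorem PosDef.isUnit_exp_sub_one {B : Matrix n n ℝ} (hB : B.PosDef) :
    IsUnit (NormedSpace.exp B - 1) := by
  have hB_sa : IsSelfAdjoint B := hB.isHermitian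
  rw [← real_cfc_exp_eq_exp hB.isHermitian, ← cfc_const_one ℝ B, ← cfc_sub Real.exp _ B,
    isUnit_cfc_iff _ B, hB.isHermitian.spectrum_real_eq_range_eigenvalues]
  rintro - ⟨i, rfl⟩
  exact sub_ne_zero.mpr (Real.exp_eq_one_iff _ |>.not.mpr (hB.eigenvalues_pos i).ne')

theorem PosSemidef.mul_exp_smul {A : Matrix n n ℝ} (hA : A.PosSemidef) (t : ℝ) :
    (A * NormedSpace.exp (t • A)).PosSemidef := by
  have hsq : A * NormedSpace.exp (t • A) =
      NormedSpace.exp ((t / 2) • A) * A * (NormedSpace.exp ((t / 2) • A))ᴴ := by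
    rw [(IsHermitian.exp (hA.isHermitian.smul (IsSelfAdjoint.all (t / 2)))).eq,
      ((Commute.refl A).smul_right (t / 2)).exp_right.eq.symm, mul_assoc,
      exp_smul_mul_exp_smul, add_halves]
  rw [hsq]
  exact hA.mul_mul_conjTranspose_same _

theorem PosDef.mul_inv_mul_add_posSemidef {K : Type*} [Field K] [PartialOrder K] [StarRing K]
    [AddLeftMono K] {E G P : Matrix n n K} (hE : E.PosDef)
    (hG : G.IsHermitian) (hGu : IsUnit G) (hP : P.PosSemidef) : (G * E⁻¹ * G + P).PosDef := by
  refine PosDef.add_posSemidef ?_ hP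
  simpa only [hG.eq] using hE.inv.conjTranspose_mul_mul_same (mulVec_injective_iff_isUnit.mpr hGu)

theorem inv_exp_neg_smul_sub_smul_one (A : Matrix n n ℝ) (t c : ℝ) :
    (NormedSpace.exp ((-t) • A) - c • 1)⁻¹ =
      (1 - c • NormedSpace.exp (t • A))⁻¹ * NormedSpace.exp (t • A) := by
  have hdet : IsUnit (NormedSpace.exp (t • A)).det :=
    (isUnit_iff_isUnit_det _).mp (isUnit_exp _)
  have hfactor : NormedSpace.exp ((-t) • A) - c • 1 =
      (NormedSpace.exp (t • A))⁻¹ * (1 - c • NormedSpace.exp (t • A)) := by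
    rw [neg_smul, exp_neg, Matrix.mul_sub, mul_one, mul_smul_comm, nonsing_inv_mul _ hdet]
  rw [hfactor, Matrix.mul_inv_rev, nonsing_inv_nonsing_inv _ hdet]

theorem eq_mul_inv_mul_mul_inv_mul_mul {α : Type*} [CommRing α] {E H : Matrix n n α}
    (hE : IsUnit E) (hH : IsUnit H) :
    E = H * (H * E⁻¹ * H)⁻¹ * H := by
  have hEd := (isUnit_iff_isUnit_det E).mp hE
  have hHd := (isUnit_iff_isUnit_det H).mp hH
  rw [Matrix.mul_inv_rev, Matrix.mul_inv_rev, nonsing_inv_nonsing_inv _ hEd, ← mul_assoc,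
    ← mul_assoc, mul_nonsing_inv _ hHd, one_mul, mul_assoc, nonsing_inv_mul _ hHd, mul_one]

theorem exp_neg_smul_mul_mul_exp_neg_smul {B F X W : Matrix n n ℝ} {s : ℝ} {k : ℕ}
    (hW : Commute W (NormedSpace.exp ((-(k * s)) • B)))
    (hF : F + W = NormedSpace.exp (s • B) ^ k * (X + W) * NormedSpace.exp (s • B) ^ k) :
    NormedSpace.exp ((-(k * s)) • B) * F * NormedSpace.exp ((-(k * s)) • B) =
      X + W * (1 - NormedSpace.exp ((-(2 * k * s)) • B)) := by
  have hpow : NormedSpace.exp (s • B) ^ k = NormedSpace.exp ((k * s) • B) := by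
    rw [← exp_nsmul, ← Nat.cast_smul_eq_nsmul ℝ, smul_smul]
  have hexp_add (t u : ℝ) (htu : t + u = 0) :
      NormedSpace.exp (t • B) * NormedSpace.exp (u • B) = 1 := by
    rw [exp_smul_mul_exp_smul, htu, zero_smul, NormedSpace.exp_zero]
  have hsq : NormedSpace.exp ((-(2 * k * s)) • B) =
      NormedSpace.exp ((-(k * s)) • B) * NormedSpace.exp ((-(k * s)) • B) := by
    rw [exp_smul_mul_exp_smul]; ring_nf
  rw [hsq]
  exact mul_mul_eq_add_mul_one_sub_of_eq_mul_add_mul (hpow ▸ hF) (hexp_add _ _ (by ring))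
    (hexp_add _ _ (by ring)) hW

end Matrix

section FRWSplitting

variable {n : Type*} [Fintype n] [DecidableEq n] {A Γ Ω : Matrix n n ℝ} {γ : ℝ}

theorem frw_omega_eq (hΓ : Γ = A + (1 / 2 : ℝ) • 1) :
    (1 - Real.exp γ) • (NormedSpace.exp ((-(2 * γ)) • A) - Real.exp γ • 1)⁻¹ =
      (1 - Real.exp γ) •
        ((1 - NormedSpace.exp ((2 * γ) • Γ))⁻¹ * NormedSpace.exp ((2 * γ) • A)) := by
  rw [inv_exp_neg_smul_sub_smul_one, hΓ, exp_smul_add_smul_one, show 2 * γ * (1 / 2) = γ by ring]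

theorem isUnit_one_sub_exp_of_frw (hA : A.PosSemidef) (hγ : 0 < γ)
    (hΓ : Γ = A + (1 / 2 : ℝ) • 1) : IsUnit (1 - NormedSpace.exp ((2 * γ) • Γ)) := by
  have hΓpos : ((2 * γ) • Γ).PosDef :=
    hΓ ▸ (PosDef.one.smul one_half_pos |>.posSemidef_add hA).smul (by positivity)
  simpa only [neg_sub] using hΓpos.isUnit_exp_sub_one.neg

theorem frw_step_posDef (hA : A.PosSemidef) (hγ : 0 ≤ γ) (hΓ : Γ = A + (1 / 2 : ℝ) • 1)
    {E : Matrix n n ℝ} (hE : E.PosDef) :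
    (NormedSpace.exp (γ • Γ) * E⁻¹ * NormedSpace.exp (γ • Γ)
      + (Real.exp γ - 1) • (A * NormedSpace.exp ((2 * γ) • A))).PosDef := by
  have hΓ_herm : Γ.IsHermitian :=
    hΓ ▸ hA.isHermitian.add (isHermitian_one.smul (IsSelfAdjoint.all _))
  exact hE.mul_inv_mul_add_posSemidef (hΓ_herm.smul (IsSelfAdjoint.all γ)).exp (isUnit_exp _)
    ((hA.mul_exp_smul _).smul (sub_nonneg.mpr (Real.one_le_exp hγ)))

theorem commute_mul_exp_smul_of_frw (hΓ : Γ = A + (1 / 2 : ℝ) • 1)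
    (hΩ : Ω = (1 - Real.exp γ) •
      ((1 - NormedSpace.exp ((2 * γ) • Γ))⁻¹ * NormedSpace.exp ((2 * γ) • A))) (t : ℝ) :
    Commute (Ω * A) (NormedSpace.exp (t • Γ)) := by
  have hAΓ : Commute A Γ := hΓ ▸ (Commute.refl A).add_right ((Commute.one_right A).smul_right _)
  have hAL : Commute A (1 - NormedSpace.exp ((2 * γ) • Γ)) :=
    (Commute.one_right A).sub_right (hAΓ.smul_right _).exp_right
  have hAΩ : Commute A Ω := hΩ ▸ ((commute_nonsing_inv_right hAL).mul_right
    ((Commute.refl A).smul_right _).exp_right).smul_right _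
  have hΩAΓ : Commute (Ω * A) Γ :=
    hΓ ▸ (hAΩ.symm.mul_left (Commute.refl A)).add_right ((Commute.one_right _).smul_right _)
  exact (hΩAΓ.smul_right t).exp_right

theorem exp_smul_mul_mul_exp_smul_sub_of_frw (hΓ : Γ = A + (1 / 2 : ℝ) • 1)
    (hL : IsUnit (1 - NormedSpace.exp ((2 * γ) • Γ)))
    (hΩ : Ω = (1 - Real.exp γ) •
      ((1 - NormedSpace.exp ((2 * γ) • Γ))⁻¹ * NormedSpace.exp ((2 * γ) • A))) :
    NormedSpace.exp (γ • Γ) * (Ω * A) * NormedSpace.exp (γ • Γ) - Ω * A =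
      (Real.exp γ - 1) • (A * NormedSpace.exp ((2 * γ) • A)) := by
  have hL_eq : 1 - NormedSpace.exp ((2 * γ) • Γ) =
      1 - Real.exp γ • NormedSpace.exp ((2 * γ) • A) := by
    rw [hΓ, exp_smul_add_smul_one, show 2 * γ * (1 / 2) = γ by ring]
  set f := NormedSpace.exp ((2 * γ) • A)
  set L := 1 - NormedSpace.exp ((2 * γ) • Γ)
  have hAf : Commute A f := ((Commute.refl A).smul_right _).exp_right
  have hAL : Commute A L := hL_eq ▸ (Commute.one_right A).sub_right (hAf.smul_right _)
  have hfL : Commute f L := hL_eq ▸ (Commute.one_right f).sub_right ((Commute.refl f).smul_right _)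
  have hΩL : Ω * L = (1 - Real.exp γ) • f := by
    rw [hΩ, smul_mul_assoc, mul_assoc, hfL.eq, ← mul_assoc,
      nonsing_inv_mul _ ((isUnit_iff_isUnit_det L).mp hL), one_mul]
  calc NormedSpace.exp (γ • Γ) * (Ω * A) * NormedSpace.exp (γ • Γ) - Ω * A
      = Ω * A * (NormedSpace.exp (γ • Γ) * NormedSpace.exp (γ • Γ)) - Ω * A := by
        rw [← (commute_mul_exp_smul_of_frw hΓ hΩ γ).eq, mul_assoc]
    _ = -(Ω * (A * L)) := by
        rw [exp_smul_mul_exp_smul, ← two_mul]; simp only [L]; noncomm_ring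
    _ = (Real.exp γ - 1) • (A * f) := by
        rw [hAL.eq, ← mul_assoc, hΩL, smul_mul_assoc, ← hAf.eq, ← neg_smul, neg_sub]

end FRWSplitting

theorem wfr_split_FRW_covariance_error_closed_form_general
    (d : ℕ)
    (Cπ : Matrix (Fin d) (Fin d) ℝ) (hCπ : Cπ.PosDef)
    (Γ : Matrix (Fin d) (Fin d) ℝ) (hΓ : Γ = Cπ⁻¹ + (1 / 2 : ℝ) • 1)
    (γ : ℝ) (hγ : 0 < γ)
    (E₀ : Matrix (Fin d) (Fin d) ℝ) (hE₀ : E₀.PosDef)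
    (Ωα : Matrix (Fin d) (Fin d) ℝ)
    (hΩα : Ωα = (1 - Real.exp γ) •
      (NormedSpace.exp ((-(2 * γ)) • Cπ⁻¹) - Real.exp γ • (1 : Matrix (Fin d) (Fin d) ℝ))⁻¹)
    (Eα : ℕ → Matrix (Fin d) (Fin d) ℝ)
    (hE0 : Eα 0 = E₀)
    (hErec : ∀ n, Eα (n + 1) =
      (NormedSpace.exp (γ • Γ) * (Eα n)⁻¹ * NormedSpace.exp (γ • Γ)
        + (Real.exp γ - 1) • (Cπ⁻¹ * NormedSpace.exp ((2 * γ) • Cπ⁻¹)))⁻¹) :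
    Ωα = (1 - Real.exp γ) •
      ((1 - NormedSpace.exp ((2 * γ) • Γ))⁻¹ * NormedSpace.exp ((2 * γ) • Cπ⁻¹)) ∧
    ∀ n : ℕ,
      IsUnit (Eα n) ∧
      IsUnit (NormedSpace.exp (γ • Γ) * (Eα n)⁻¹ * NormedSpace.exp (γ • Γ)
        + (Real.exp γ - 1) • (Cπ⁻¹ * NormedSpace.exp ((2 * γ) • Cπ⁻¹))) ∧
      IsUnit (E₀⁻¹ + Ωα * Cπ⁻¹ * (1 - NormedSpace.exp ((-(2 * (n : ℝ) * γ)) • Γ))) ∧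
      Eα n = NormedSpace.exp ((-((n : ℝ) * γ)) • Γ) *
        (E₀⁻¹ + Ωα * Cπ⁻¹ * (1 - NormedSpace.exp ((-(2 * (n : ℝ) * γ)) • Γ)))⁻¹ *
        NormedSpace.exp ((-((n : ℝ) * γ)) • Γ) := by
  have hA : Cπ⁻¹.PosSemidef := hCπ.inv.posSemidef
  have hΩ := hΩα.trans (frw_omega_eq hΓ)
  have hstep := fun {E} (hE : PosDef E) => frw_step_posDef hA hγ.le hΓ hE
  have hpos : ∀ k, (Eα k).PosDef := by
    intro k
    induction k with
    | zero => exact hE0 ▸ hE₀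
    | succ k ih => exact hErec k ▸ (hstep ih).inv
  have hclosed := add_eq_pow_mul_mul_pow_of_affine_recursion (F := fun k => (Eα k)⁻¹)
    (g := NormedSpace.exp (γ • Γ)) (w := Ωα * Cπ⁻¹) fun k => by
      rw [exp_smul_mul_mul_exp_smul_sub_of_frw hΓ (isUnit_one_sub_exp_of_frw hA hγ hΓ) hΩ,
        hErec k, nonsing_inv_nonsing_inv _ ((isUnit_iff_isUnit_det _).mp (hstep (hpos k)).isUnit)]
  refine ⟨hΩ, fun k => ⟨(hpos k).isUnit, (hstep (hpos k)).isUnit, ?_⟩⟩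
  rw [← exp_neg_smul_mul_mul_exp_neg_smul (commute_mul_exp_smul_of_frw hΓ hΩ _)
    (hE0 ▸ hclosed k)]
  exact ⟨((isUnit_exp _).mul (hpos k).inv.isUnit).mul (isUnit_exp _),
    eq_mul_inv_mul_mul_inv_mul_mul (hpos k).isUnit (isUnit_exp _)⟩

/-- Closed form of the covariance error of the Fisher–Rao-then-Wasserstein
splitting scheme between Gaussians after `n` steps of size `γ`, with
`Ω^α = (1 − e^γ)(e^{−2γC_π⁻¹} − e^γ I)⁻¹ = (1 − e^γ)(I − e^{2γΓ})⁻¹ e^{2γC_π⁻¹}`. -/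
theorem wfr_split_FRW_covariance_error_closed_form
    (d : ℕ) (hd : 1 ≤ d)
    (Cπ : Matrix (Fin d) (Fin d) ℝ) (hCπ : Cπ.PosDef)
    (Γ : Matrix (Fin d) (Fin d) ℝ) (hΓ : Γ = Cπ⁻¹ + (1 / 2 : ℝ) • 1)
    (γ : ℝ) (hγ : 0 < γ)
    (E₀ : Matrix (Fin d) (Fin d) ℝ) (hE₀ : E₀.PosDef)
    (Ωα : Matrix (Fin d) (Fin d) ℝ)
    (hΩα : Ωα = (1 - Real.exp γ) •
      (NormedSpace.exp ((-(2 * γ)) • Cπ⁻¹) - Real.exp γ • (1 : Matrix (Fin d) (Fin d) ℝ))⁻¹)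
    (Eα : ℕ → Matrix (Fin d) (Fin d) ℝ)
    (hE0 : Eα 0 = E₀)
    (hErec : ∀ n, Eα (n + 1) =
      (NormedSpace.exp (γ • Γ) * (Eα n)⁻¹ * NormedSpace.exp (γ • Γ)
        + (Real.exp γ - 1) • (Cπ⁻¹ * NormedSpace.exp ((2 * γ) • Cπ⁻¹)))⁻¹) :
    Ωα = (1 - Real.exp γ) •
      ((1 - NormedSpace.exp ((2 * γ) • Γ))⁻¹ * NormedSpace.exp ((2 * γ) • Cπ⁻¹)) ∧
    ∀ n : ℕ,
      IsUnit (Eα n) ∧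
      IsUnit (NormedSpace.exp (γ • Γ) * (Eα n)⁻¹ * NormedSpace.exp (γ • Γ)
        + (Real.exp γ - 1) • (Cπ⁻¹ * NormedSpace.exp ((2 * γ) • Cπ⁻¹))) ∧
      IsUnit (E₀⁻¹ + Ωα * Cπ⁻¹ * (1 - NormedSpace.exp ((-(2 * (n : ℝ) * γ)) • Γ))) ∧
      Eα n = NormedSpace.exp ((-((n : ℝ) * γ)) • Γ) *
        (E₀⁻¹ + Ωα * Cπ⁻¹ * (1 - NormedSpace.exp ((-(2 * (n : ℝ) * γ)) • Γ)))⁻¹ *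
        NormedSpace.exp ((-((n : ℝ) * γ)) • Γ) :=
  wfr_split_FRW_covariance_error_closed_form_general d Cπ hCπ Γ hΓ γ hγ E₀ hE₀ Ωα hΩα Eα hE0 hErec
end
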